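/- For n ≥ 1, the generating function A_n(u,v,q) = ∑_{λ∈A_n} q^{|λ|} u^{|⌊λ⌋|} v^{o(⌊λ⌋)} satisfies the recurrence A_n(u,v,q) = ∑_{m=0}^{n} [n choose m]_q · q^{binom(m+1,2)} · u^m · ∑_{λ∈A_m} q^{|λ|} u^{|⌊λ⌋|} v^{m − o(⌊λ⌋)}, as formal power series in u, v, q (for λ ∈ A_m one has o(⌊λ⌋) ≤ m, so all exponents of v are nonnegative; the inner sum is (uv)^m·A_m(u, 1/v, q) in the paper's notation, and the m = 0 term is 1, corresponding to A_0 = 1). -/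

import Mathlib

noncomputable section

/-- The three-variable generating function `A_n(u,v,q) = ∑_{λ∈A_n} q^{|λ|}
u^{|⌊λ⌋|} v^{o(⌊λ⌋)}` of the anti-lecture hall compositions, as a formal power
series in `u = X 0`, `v = X 1`, `q = X 2`, defined by its coefficients. -/
def alhGF (n : ℕ) : MvPowerSeries (Fin 3) ℚ :=
  fun d => (Nat.card {l : Fin n → ℕ //
    (∀ i : Fin n, ∀ h : i.1 + 1 < n,
      ((i.1 : ℤ) + 1) * (l ⟨i.1 + 1, h⟩ : ℤ) ≤ ((i.1 : ℤ) + 2) * (l i : ℤ)) ∧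
    (∑ i : Fin n, l i / (i.1 + 1)) = d 0 ∧
    (Finset.univ.filter (fun i : Fin n => Odd (l i / (i.1 + 1)))).card = d 1 ∧
    (∑ i, l i) = d 2} : ℚ)

/-- The inner sum `∑_{λ∈A_m} q^{|λ|} u^{|⌊λ⌋|} v^{m-o(⌊λ⌋)}` of the recurrence,
as a formal power series in `u = X 0`, `v = X 1`, `q = X 2`. -/
def alhGFinner (m : ℕ) : MvPowerSeries (Fin 3) ℚ :=
  fun d => (Nat.card {l : Fin m → ℕ //
    (∀ i : Fin m, ∀ h : i.1 + 1 < m,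
      ((i.1 : ℤ) + 1) * (l ⟨i.1 + 1, h⟩ : ℤ) ≤ ((i.1 : ℤ) + 2) * (l i : ℤ)) ∧
    (∑ i : Fin m, l i / (i.1 + 1)) = d 0 ∧
    m - (Finset.univ.filter (fun i : Fin m => Odd (l i / (i.1 + 1)))).card = d 1 ∧
    (∑ i, l i) = d 2} : ℚ)

/-!
Let `m` be the number of indices with `⌊λᵢ/i⌋ ≥ 1`; since `⌊λ⌋` is weakly decreasing these are
the first `m` of them. Subtracting `i` from `λᵢ` for `i ≤ m` leaves some `μ ∈ A_m` (the defining
inequalities are invariant under this shift), and `⌊λᵢ/i⌋ = ⌊μᵢ/i⌋ + 1` there, so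
`|⌊λ⌋| = m + |⌊μ⌋|` and `o(⌊λ⌋) = m - o(⌊μ⌋)`. The remaining parts satisfy `λᵢ < i`, which forces
them to be weakly decreasing and at most `m`, and conversely every such tail can be appended.
Hence the compositions with a given `m` are in bijection with pairs (partition in an
`(n - m) × m` box, `μ ∈ A_m`), with `|λ| = binom(m+1, 2) + |tail| + |μ|`; the box partitions
contribute `[n choose m]_q` by the `q`-Pascal recurrence.
-/

open Finset MvPowerSeries
open Finsupp (single)

theorem finite_tuples_le (n N : ℕ) : Finite {l : Fin n → ℕ // ∀ i, l i ≤ N} :=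
  (Set.finite_Iic fun _ : Fin n => N).to_subtype

theorem Fin.antitone_of_forall_val_eq_succ {α : Type*} [Preorder α] {n : ℕ} {f : Fin n → α}
    (h : ∀ i j : Fin n, j.1 = i.1 + 1 → f j ≤ f i) : Antitone f := by
  cases n with
  | zero => exact fun i => i.elim0
  | succ n => exact Fin.antitone_iff_succ_le.2 fun i => h _ _ (by simp)

theorem Fin.antitone_cons {α : Type*} [Preorder α] {n : ℕ} {x : α} {c : Fin n → α}
    (hc : Antitone c) (hx : ∀ i, c i ≤ x) : Antitone (Fin.cons x c : Fin (n + 1) → α) := by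
  intro i j hij
  cases j using Fin.cases with
  | zero => rw [Fin.le_zero_iff.1 hij]
  | succ j =>
    cases i using Fin.cases with
    | zero => simpa using hx j
    | succ i => simpa using hc (Fin.succ_le_succ_iff.1 hij)

theorem Fin.mem_iff_val_lt_card_of_isLowerSet {n : ℕ} {s : Finset (Fin n)}
    (hs : IsLowerSet (s : Set (Fin n))) (i : Fin n) : i ∈ s ↔ i.1 < #s := by
  constructor
  · intro hi
    have := card_le_card fun j hj => hs (mem_Iic.1 hj) hi
    rw [Fin.card_Iic] at this
    omega
  · intro hi
    by_contra h
    have := card_le_card fun j hj => mem_Iio.2 (lt_of_not_ge fun hij => h (hs hij hj))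
    rw [Fin.card_Iio] at this
    omega

theorem Fin.sum_val_eq_choose_two (m : ℕ) : ∑ i : Fin m, (i : ℕ) = m.choose 2 := by
  rw [Fin.sum_univ_eq_sum_range (fun i => i) m, sum_range_id, Nat.choose_two_right]

theorem Nat.div_add_two_le_div_add_one {k x y : ℕ} (h : (k + 1) * y ≤ (k + 2) * x) :
    y / (k + 2) ≤ x / (k + 1) := by
  rw [Nat.le_div_iff_mul_le k.succ_pos]
  refine Nat.le_of_mul_le_mul_left ?_ (k + 1).succ_pos
  calc (k + 2) * (y / (k + 2) * (k + 1)) = (k + 1) * (y / (k + 2) * (k + 2)) := by ring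
    _ ≤ (k + 1) * y := Nat.mul_le_mul_left _ (Nat.div_mul_le_self y (k + 2))
    _ ≤ (k + 2) * x := h

theorem Nat.le_of_mul_le_mul_add_one {k x y : ℕ} (h : (k + 1) * y ≤ (k + 2) * x)
    (hx : x ≤ k) : y ≤ x := by
  nlinarith

section WeightGF

variable {σ R α β : Type*} [CommSemiring R]

/-- The series `∑ₐ X ^ (w a)`. It counts fibres with `Nat.card`, so it is only meaningful when
the fibres of `w` are finite (`Nat.card` of an infinite type is `0`). -/
def weightGF (w : α → σ →₀ ℕ) : MvPowerSeries σ R :=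
  fun d => Nat.card {a // w a = d}

theorem coeff_weightGF (w : α → σ →₀ ℕ) (d : σ →₀ ℕ) :
    coeff d (weightGF w : MvPowerSeries σ R) = Nat.card {a // w a = d} :=
  rfl

theorem weightGF_congr {w : α → σ →₀ ℕ} {w' : β → σ →₀ ℕ} (e : α ≃ β)
    (h : ∀ a, w' (e a) = w a) : (weightGF w' : MvPowerSeries σ R) = weightGF w := by
  ext d
  simp only [coeff_weightGF]
  exact congrArg _ (Nat.card_congr (e.subtypeEquiv fun a => by rw [h])).symm

instance finite_fiber_subtype (w : α → σ →₀ ℕ) (p : α → Prop) (d : σ →₀ ℕ)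
    [Finite {a // w a = d}] : Finite {x : {a // p a} // w x = d} :=
  Finite.of_injective (fun x => (⟨x.1.1, x.2⟩ : {a // w a = d}))
    fun _ _ h => Subtype.ext (Subtype.ext (by simpa using h))

theorem weightGF_sum_elim (w : α → σ →₀ ℕ) (w' : β → σ →₀ ℕ)
    [∀ d, Finite {a // w a = d}] [∀ d, Finite {b // w' b = d}] :
    (weightGF (Sum.elim w w') : MvPowerSeries σ R) = weightGF w + weightGF w' := by
  ext d
  simp only [map_add, coeff_weightGF, ← Nat.cast_add, ← Nat.card_sum]
  exact congrArg _ (Nat.card_congr Equiv.subtypeSum)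

theorem weightGF_eq_add_compl (w : α → σ →₀ ℕ) [∀ d, Finite {a // w a = d}] (p : α → Prop) :
    (weightGF w : MvPowerSeries σ R) =
      weightGF (fun a : {a // p a} => w a) + weightGF (fun a : {a // ¬ p a} => w a) := by
  classical
  rw [← weightGF_sum_elim]
  exact weightGF_congr (Equiv.sumCompl p) (by rintro (a | a) <;> rfl)

theorem weightGF_eq_sum_fiberwise {ι : Type*} [DecidableEq ι] (w : α → σ →₀ ℕ)
    [∀ d, Finite {a // w a = d}] (f : α → ι) (s : Finset ι) (hf : ∀ a, f a ∈ s) :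
    (weightGF w : MvPowerSeries σ R) = ∑ i ∈ s, weightGF (fun a : {a // f a = i} => w a) := by
  ext d
  simp only [map_sum, coeff_weightGF, ← Nat.cast_sum]
  congr 1
  have := Fintype.ofFinite {a // w a = d}
  rw [Nat.card_eq_fintype_card, ← card_univ,
    card_eq_sum_card_fiberwise (f := fun a : {a // w a = d} => f a) fun a _ => hf a]
  refine sum_congr rfl fun i _ => ?_
  rw [← Fintype.card_subtype, ← Nat.card_eq_fintype_card]
  exact Nat.card_congr ((Equiv.subtypeSubtypeEquivSubtypeInter (w · = d) (f · = i)).trans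
    ((Equiv.subtypeEquivRight fun _ => and_comm).trans
      (Equiv.subtypeSubtypeEquivSubtypeInter (f · = i) (w · = d)).symm))

theorem weightGF_prod (w : α → σ →₀ ℕ) (w' : β → σ →₀ ℕ)
    [∀ d, Finite {a // w a = d}] [∀ d, Finite {b // w' b = d}] :
    (weightGF (fun p : α × β => w p.1 + w' p.2) : MvPowerSeries σ R) =
      weightGF w * weightGF w' := by
  classical
  ext d
  simp only [coeff_mul, coeff_weightGF, ← Nat.cast_mul, ← Nat.cast_sum, ← Nat.card_prod]
  congr 1
  rw [← sum_coe_sort (antidiagonal d), ← Nat.card_sigma]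
  exact Nat.card_congr
    { toFun := fun p => ⟨⟨(w p.1.1, w' p.1.2), mem_antidiagonal.2 p.2⟩, ⟨p.1.1, rfl⟩, ⟨p.1.2, rfl⟩⟩
      invFun := fun x => ⟨(x.2.1.1, x.2.2.1), by
        rw [x.2.1.2, x.2.2.2]
        exact mem_antidiagonal.1 x.1.2⟩
      left_inv := fun _ => rfl
      right_inv := by
        rintro ⟨⟨⟨e₁, e₂⟩, he⟩, ⟨a, ha⟩, ⟨b, hb⟩⟩
        dsimp only at ha hb
        subst ha hb
        rfl }

theorem weightGF_const_add (e : σ →₀ ℕ) (w : α → σ →₀ ℕ) :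
    (weightGF (fun a => e + w a) : MvPowerSeries σ R) = monomial e 1 * weightGF w := by
  ext d
  rw [coeff_monomial_mul, one_mul, coeff_weightGF]
  split_ifs with h
  · rw [coeff_weightGF]
    exact congrArg _ (Nat.card_congr (Equiv.subtypeEquivRight fun a =>
      ⟨fun h' => by rw [← h', add_tsub_cancel_left],
        fun h' => by rw [h', add_tsub_cancel_of_le h]⟩))
  · have : IsEmpty {a // e + w a = d} := ⟨fun a => h (a.2 ▸ le_self_add)⟩
    simp

theorem weightGF_of_subsingleton [Subsingleton α] (w : α → σ →₀ ℕ) (a : α) :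
    (weightGF w : MvPowerSeries σ R) = monomial (w a) 1 := by
  classical
  ext d
  rw [coeff_weightGF, coeff_monomial]
  split_ifs with h
  · have : Unique {a' // w a' = d} :=
      ⟨⟨⟨a, h.symm⟩⟩, fun _ => Subtype.ext (Subsingleton.elim _ _)⟩
    simp
  · have : IsEmpty {a' // w a' = d} :=
      ⟨fun a' => h (by rw [← a'.2, Subsingleton.elim a'.1 a])⟩
    simp

end WeightGF

section BoxPartitions

variable {σ R : Type*} [CommSemiring R]

abbrev BoxPartition (m b : ℕ) : Type := {c : Fin b → ℕ // Antitone c ∧ ∀ i, c i ≤ m}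

instance (m b : ℕ) : Finite (BoxPartition m b) :=
  have := finite_tuples_le b m
  Finite.of_injective (fun c => (⟨c.1, c.2.2⟩ : {c : Fin b → ℕ // ∀ i, c i ≤ m}))
    fun _ _ h => Subtype.ext (by simpa using h)

def boxGF (k : σ) (m b : ℕ) : MvPowerSeries σ R :=
  weightGF fun c : BoxPartition m b => single k (∑ i, c.1 i)

namespace BoxPartition

def equivFstLe (m b : ℕ) :
    BoxPartition m (b + 1) ≃ {c : BoxPartition (m + 1) (b + 1) // c.1 0 ≤ m} where
  toFun c := ⟨⟨c.1, c.2.1, fun i => (c.2.2 i).trans m.le_succ⟩, c.2.2 0⟩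
  invFun c := ⟨c.1.1, c.1.2.1, fun i => (c.1.2.1 (Fin.zero_le i)).trans c.2⟩

def consEquiv (m b : ℕ) :
    BoxPartition (m + 1) b ≃ {c : BoxPartition (m + 1) (b + 1) // ¬ c.1 0 ≤ m} where
  toFun c := ⟨⟨Fin.cons (m + 1) c.1, Fin.antitone_cons c.2.1 c.2.2, Fin.cases le_rfl c.2.2⟩,
    by simp⟩
  invFun c := ⟨Fin.tail c.1.1, fun _ _ h => c.1.2.1 (Fin.succ_le_succ_iff.2 h),
    fun i => c.1.2.2 i.succ⟩
  right_inv c := by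
    have h0 : c.1.1 0 = m + 1 := le_antisymm (c.1.2.2 0) (not_le.1 c.2)
    ext : 2
    simp [← h0]

end BoxPartition

theorem boxGF_zero_left (k : σ) (b : ℕ) : (boxGF k 0 b : MvPowerSeries σ R) = 1 := by
  have : Subsingleton (BoxPartition 0 b) :=
    ⟨fun x y => Subtype.ext (funext fun i => by have := x.2.2 i; have := y.2.2 i; omega)⟩
  rw [boxGF, weightGF_of_subsingleton _ ⟨fun _ => 0, antitone_const, fun _ => le_rfl⟩]
  simp

theorem boxGF_zero_right (k : σ) (m : ℕ) : (boxGF k m 0 : MvPowerSeries σ R) = 1 := by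
  rw [boxGF, weightGF_of_subsingleton _ ⟨fun _ => 0, antitone_const, fun _ => Nat.zero_le m⟩]
  simp

theorem boxGF_succ_succ (k : σ) (m b : ℕ) :
    (boxGF k (m + 1) (b + 1) : MvPowerSeries σ R) =
      boxGF k m (b + 1) + X k ^ (m + 1) * boxGF k (m + 1) b := by
  rw [boxGF, weightGF_eq_add_compl _ fun c : BoxPartition (m + 1) (b + 1) => c.1 0 ≤ m,
    X_pow_eq, boxGF, boxGF, ← weightGF_const_add]
  congr 1
  · exact weightGF_congr (BoxPartition.equivFstLe m b) fun _ => rfl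
  · exact weightGF_congr (BoxPartition.consEquiv m b) fun c => by
      rw [← Finsupp.single_add, ← Fin.sum_cons]
      rfl

end BoxPartitions

section GaussianBinomial

variable {σ R : Type*} [CommRing R]

theorem prod_one_sub_X_pow_mul_boxGF (k : σ) (m b : ℕ) :
    (∏ i ∈ range m, (1 - X k ^ (1 + i) : MvPowerSeries σ R)) * boxGF k m b =
      ∏ i ∈ range m, (1 - X k ^ (b + 1 + i)) := by
  induction m generalizing b with
  | zero => simp [boxGF_zero_left]
  | succ m ihm =>
    induction b with
    | zero => simp [boxGF_zero_right]
    | succ b ihb =>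
      set A := ∏ i ∈ range m, (1 - (X k : MvPowerSeries σ R) ^ (b + 1 + 1 + i))
      have hshift : ∏ i ∈ range (m + 1), (1 - (X k : MvPowerSeries σ R) ^ (b + 1 + i)) =
          (1 - X k ^ (b + 1)) * A := by
        rw [prod_range_succ', mul_comm]
        simp only [A, add_zero, add_assoc, add_comm 1]
      calc (∏ i ∈ range (m + 1), (1 - X k ^ (1 + i))) * boxGF k (m + 1) (b + 1)
          = (1 - X k ^ (1 + m)) * ((∏ i ∈ range m, (1 - X k ^ (1 + i))) * boxGF k m (b + 1)) +
              X k ^ (m + 1) *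
                ((∏ i ∈ range (m + 1), (1 - X k ^ (1 + i))) * boxGF k (m + 1) b) := by
            rw [boxGF_succ_succ, prod_range_succ]
            ring
        _ = (1 - X k ^ (1 + m)) * A + X k ^ (m + 1) * ((1 - X k ^ (b + 1)) * A) := by
            rw [ihm, ihb, hshift]
        _ = ∏ i ∈ range (m + 1), (1 - X k ^ (b + 1 + 1 + i)) := by
            rw [prod_range_succ]
            ring

theorem prod_one_sub_X_pow_mul_inv_eq_boxGF {K : Type*} [Field K] (k : σ) (m b : ℕ) :
    (∏ i ∈ range m, (1 - X k ^ (b + 1 + i) : MvPowerSeries σ K)) *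
      (∏ i ∈ range m, (1 - X k ^ (1 + i)))⁻¹ = boxGF k m b := by
  have hunit : constantCoeff (∏ i ∈ range m, (1 - X k ^ (1 + i) : MvPowerSeries σ K)) ≠ 0 := by
    simp [map_prod]
  rw [← prod_one_sub_X_pow_mul_boxGF, mul_right_comm, MvPowerSeries.mul_inv_cancel _ hunit,
    one_mul]

end GaussianBinomial

section AntiLectureHall

variable {n : ℕ}

def IsAntiLectureHall (l : Fin n → ℕ) : Prop :=
  ∀ i j : Fin n, j.1 = i.1 + 1 → (i.1 + 1) * l j ≤ (i.1 + 2) * l i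

/-- The tuple `⌊λ⌋ = (⌊λ₁/1⌋, …, ⌊λₙ/n⌋)`. -/
def floors (l : Fin n → ℕ) (i : Fin n) : ℕ := l i / (i.1 + 1)

def oddFloorCount (l : Fin n → ℕ) : ℕ := #{i | Odd (floors l i)}

def posFloorCount (l : Fin n → ℕ) : ℕ := #{i | 0 < floors l i}

def alhWeight (l : Fin n → ℕ) : Fin 3 →₀ ℕ :=
  single 0 (∑ i, floors l i) + single 1 (oddFloorCount l) + single 2 (∑ i, l i)

def alhDualWeight (l : Fin n → ℕ) : Fin 3 →₀ ℕ :=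
  single 0 (∑ i, floors l i) + single 1 (n - oddFloorCount l) + single 2 (∑ i, l i)

theorem isAntiLectureHall_iff (l : Fin n → ℕ) :
    (∀ i : Fin n, ∀ h : i.1 + 1 < n,
      ((i.1 : ℤ) + 1) * (l ⟨i.1 + 1, h⟩ : ℤ) ≤ ((i.1 : ℤ) + 2) * (l i : ℤ)) ↔
      IsAntiLectureHall l := by
  refine ⟨fun H i j hij => ?_, fun H i h => by exact_mod_cast H i _ rfl⟩
  rw [show j = ⟨i.1 + 1, hij ▸ j.2⟩ from Fin.ext hij]
  exact_mod_cast H i _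

theorem single_add_single_add_single_eq_iff (x y z : ℕ) (d : Fin 3 →₀ ℕ) :
    single 0 x + single 1 y + single 2 z = d ↔ x = d 0 ∧ y = d 1 ∧ z = d 2 := by
  constructor
  · rintro rfl
    simp
  · rintro ⟨rfl, rfl, rfl⟩
    ext i
    fin_cases i <;> simp

theorem alhGF_eq_weightGF (n : ℕ) :
    alhGF n = weightGF fun l : {l : Fin n → ℕ // IsAntiLectureHall l} => alhWeight l.1 := by
  ext d
  rw [coeff_weightGF]
  refine congrArg Nat.cast (Nat.card_congr ((Equiv.subtypeEquivRight fun l => ?_).trans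
    (Equiv.subtypeSubtypeEquivSubtypeInter IsAntiLectureHall (alhWeight · = d)).symm))
  rw [isAntiLectureHall_iff, alhWeight, single_add_single_add_single_eq_iff]
  exact Iff.rfl

theorem alhGFinner_eq_weightGF (n : ℕ) :
    alhGFinner n =
      weightGF fun l : {l : Fin n → ℕ // IsAntiLectureHall l} => alhDualWeight l.1 := by
  ext d
  rw [coeff_weightGF]
  refine congrArg Nat.cast (Nat.card_congr ((Equiv.subtypeEquivRight fun l => ?_).trans
    (Equiv.subtypeSubtypeEquivSubtypeInter IsAntiLectureHall (alhDualWeight · = d)).symm))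
  rw [isAntiLectureHall_iff, alhDualWeight, single_add_single_add_single_eq_iff]
  exact Iff.rfl

theorem finite_fiber_of_apply_two_eq_sum (p : (Fin n → ℕ) → Prop)
    (w : (Fin n → ℕ) → Fin 3 →₀ ℕ) (hw : ∀ l, w l 2 = ∑ i, l i) (d : Fin 3 →₀ ℕ) :
    Finite {l : {l // p l} // w l.1 = d} :=
  have := finite_tuples_le n (d 2)
  Finite.of_injective
    (fun l => (⟨l.1.1, fun i => by
      have hsum : ∑ i, l.1.1 i = d 2 := (hw _).symm.trans (DFunLike.congr_fun l.2 2)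
      exact hsum ▸ single_le_sum (fun _ _ => Nat.zero_le _) (mem_univ i)⟩ :
        {l : Fin n → ℕ // ∀ i, l i ≤ d 2}))
    fun _ _ h => Subtype.ext (Subtype.ext (by simpa using h))

instance (d : Fin 3 →₀ ℕ) :
    Finite {l : {l : Fin n → ℕ // IsAntiLectureHall l} // alhWeight l.1 = d} :=
  finite_fiber_of_apply_two_eq_sum _ _ (fun _ => by simp [alhWeight]) d

instance (d : Fin 3 →₀ ℕ) :
    Finite {l : {l : Fin n → ℕ // IsAntiLectureHall l} // alhDualWeight l.1 = d} :=
  finite_fiber_of_apply_two_eq_sum _ _ (fun _ => by simp [alhDualWeight]) d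

theorem floors_antitone {l : Fin n → ℕ} (hl : IsAntiLectureHall l) : Antitone (floors l) :=
  Fin.antitone_of_forall_val_eq_succ fun i j hij => by
    simp only [floors, hij, add_assoc]
    exact Nat.div_add_two_le_div_add_one (hl i j hij)

theorem floors_pos_iff {l : Fin n → ℕ} (hl : IsAntiLectureHall l) (i : Fin n) :
    0 < floors l i ↔ i.1 < posFloorCount l := by
  have hs : IsLowerSet ((univ.filter fun i => 0 < floors l i : Finset (Fin n)) : Set (Fin n)) :=
    fun i j hji hi => by
      simp only [coe_filter, mem_univ, true_and, Set.mem_ofPred_eq] at hi ⊢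
      exact hi.trans_le (floors_antitone hl hji)
  simpa [posFloorCount] using Fin.mem_iff_val_lt_card_of_isLowerSet hs i

theorem posFloorCount_le (l : Fin n → ℕ) : posFloorCount l ≤ n :=
  (card_filter_le _ _).trans (card_fin n).le

namespace AntiLectureHall

variable {m b : ℕ} {μ : Fin m → ℕ} {c : Fin b → ℕ} {l : Fin (m + b) → ℕ}

def glue (μ : Fin m → ℕ) (c : Fin b → ℕ) : Fin (m + b) → ℕ :=
  Fin.append (fun i => μ i + (i.1 + 1)) c

def headPart (l : Fin (m + b) → ℕ) (i : Fin m) : ℕ := l (Fin.castAdd b i) - (i.1 + 1)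

def tailPart (l : Fin (m + b) → ℕ) (j : Fin b) : ℕ := l (Fin.natAdd m j)

@[simp] theorem headPart_glue : headPart (glue μ c) = μ := by
  ext i
  simp [headPart, glue]

@[simp] theorem tailPart_glue : tailPart (glue μ c) = c := by
  ext j
  simp [tailPart, glue]

theorem glue_headPart_tailPart (hl : ∀ i : Fin m, i.1 + 1 ≤ l (Fin.castAdd b i)) :
    glue (headPart l) (tailPart l) = l := by
  have hhead : (fun i : Fin m => headPart l i + (i.1 + 1)) = fun i => l (Fin.castAdd b i) :=
    funext fun i => Nat.sub_add_cancel (hl i)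
  exact (congrArg₂ Fin.append hhead rfl).trans Fin.append_castAdd_natAdd

theorem floors_glue_castAdd (i : Fin m) :
    floors (glue μ c) (Fin.castAdd b i) = floors μ i + 1 := by
  simp [floors, glue, Nat.add_div_right]

theorem floors_glue_natAdd (hc : ∀ j, c j ≤ m) (j : Fin b) :
    floors (glue μ c) (Fin.natAdd m j) = 0 := by
  simp only [floors, glue, Fin.append_right, Fin.val_natAdd]
  exact Nat.div_eq_of_lt (by have := hc j; omega)

theorem isAntiLectureHall_glue (hμ : IsAntiLectureHall μ) (hc : Antitone c)
    (hcm : ∀ j, c j ≤ m) : IsAntiLectureHall (glue μ c) := by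
  intro i j hij
  cases i using Fin.addCases with
  | left i =>
    cases j using Fin.addCases with
    | left j =>
      simp only [Fin.val_castAdd] at hij
      have := hμ i j hij
      simp only [glue, Fin.append_left, Fin.val_castAdd, hij]
      nlinarith
    | right j =>
      simp only [Fin.val_castAdd, Fin.val_natAdd] at hij
      have := hcm j
      simp only [glue, Fin.append_left, Fin.append_right, Fin.val_castAdd]
      nlinarith
  | right i =>
    cases j using Fin.addCases with
    | left j =>
      simp only [Fin.val_castAdd, Fin.val_natAdd] at hij
      omega
    | right j =>
      simp only [Fin.val_natAdd] at hij
      have := hc (show i ≤ j from Fin.le_iff_val_le_val.2 (by omega))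
      simp only [glue, Fin.append_right, Fin.val_natAdd]
      exact Nat.mul_le_mul (by omega) this

theorem posFloorCount_glue (hc : ∀ j, c j ≤ m) : posFloorCount (glue μ c) = m := by
  rw [posFloorCount, card_filter, Fin.sum_univ_add]
  simp [floors_glue_castAdd, floors_glue_natAdd hc]

theorem sum_floors_glue (hc : ∀ j, c j ≤ m) :
    ∑ i, floors (glue μ c) i = m + ∑ i, floors μ i := by
  simp [Fin.sum_univ_add, floors_glue_castAdd, floors_glue_natAdd hc, sum_add_distrib, add_comm]

theorem oddFloorCount_glue (hc : ∀ j, c j ≤ m) :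
    oddFloorCount (glue μ c) = m - oddFloorCount μ := by
  have hcompl := card_filter_add_card_filter_not (s := univ) fun i : Fin m => Odd (floors μ i)
  rw [card_univ, Fintype.card_fin] at hcompl
  rw [oddFloorCount, oddFloorCount, card_filter, Fin.sum_univ_add]
  simp only [floors_glue_castAdd, floors_glue_natAdd hc, Nat.odd_add_one, ← card_filter]
  rw [filter_false_of_mem fun _ _ => Nat.not_odd_zero, card_empty]
  omega

theorem sum_glue : ∑ i, glue μ c i = (m + 1).choose 2 + ∑ i, μ i + ∑ j, c j := by
  simp [glue, Fin.sum_univ_add, sum_add_distrib, Fin.sum_val_eq_choose_two, Nat.choose_succ_succ']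
  ring

theorem alhWeight_glue (hc : ∀ j, c j ≤ m) :
    alhWeight (glue μ c) =
      single 0 m + single 2 ((m + 1).choose 2) + (single 2 (∑ j, c j) + alhDualWeight μ) := by
  rw [alhWeight, alhDualWeight, sum_floors_glue hc, oddFloorCount_glue hc, sum_glue]
  ext k
  fin_cases k <;> simp [add_comm, add_left_comm]

theorem le_apply_castAdd (hl : IsAntiLectureHall l) (hm : posFloorCount l = m) (i : Fin m) :
    i.1 + 1 ≤ l (Fin.castAdd b i) := by
  have := (floors_pos_iff hl (Fin.castAdd b i)).2 (by simp [hm])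
  exact (Nat.div_pos_iff.1 this).2

theorem apply_natAdd_le (hl : IsAntiLectureHall l) (hm : posFloorCount l = m) (j : Fin b) :
    l (Fin.natAdd m j) ≤ m + j := by
  have := mt (floors_pos_iff hl (Fin.natAdd m j)).1 (by simp [hm])
  rw [floors, Nat.pos_iff_ne_zero, not_not, Nat.div_eq_zero_iff] at this
  simp at this
  omega

theorem isAntiLectureHall_headPart (hl : IsAntiLectureHall l) (hm : posFloorCount l = m) :
    IsAntiLectureHall (headPart l) := by
  intro i j hij
  have hi := le_apply_castAdd hl hm i
  have hj := le_apply_castAdd hl hm j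
  have := hl (Fin.castAdd b i) (Fin.castAdd b j) hij
  simp only [headPart, Fin.val_castAdd] at this hi hj ⊢
  zify [hi, hj] at this ⊢
  nlinarith

theorem antitone_tailPart (hl : IsAntiLectureHall l) (hm : posFloorCount l = m) :
    Antitone (tailPart l) :=
  Fin.antitone_of_forall_val_eq_succ fun i j hij => by
    have := hl (Fin.natAdd m i) (Fin.natAdd m j) (by simp [hij, add_assoc])
    simp only [Fin.val_natAdd] at this
    exact Nat.le_of_mul_le_mul_add_one this (apply_natAdd_le hl hm i)

theorem tailPart_le (hl : IsAntiLectureHall l) (hm : posFloorCount l = m) (j : Fin b) :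
    tailPart l j ≤ m :=
  (antitone_tailPart hl hm (show ⟨0, j.pos⟩ ≤ j from Nat.zero_le _)).trans <| by
    unfold tailPart
    simpa using apply_natAdd_le hl hm ⟨0, j.pos⟩

def fiberEquiv (m b : ℕ) :
    BoxPartition m b × {μ : Fin m → ℕ // IsAntiLectureHall μ} ≃
      {l : {l : Fin (m + b) → ℕ // IsAntiLectureHall l} // posFloorCount l.1 = m} where
  toFun p := ⟨⟨glue p.2.1 p.1.1, isAntiLectureHall_glue p.2.2 p.1.2.1 p.1.2.2⟩,
    posFloorCount_glue p.1.2.2⟩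
  invFun l := (⟨tailPart l.1.1, antitone_tailPart l.1.2 l.2, tailPart_le l.1.2 l.2⟩,
    ⟨headPart l.1.1, isAntiLectureHall_headPart l.1.2 l.2⟩)
  left_inv p := by ext : 2 <;> simp
  right_inv l := Subtype.ext (Subtype.ext (glue_headPart_tailPart (le_apply_castAdd l.1.2 l.2)))

theorem weightGF_posFloorCount_fiber {R : Type*} [CommSemiring R] (m b : ℕ) :
    (weightGF fun l : {l : {l : Fin (m + b) → ℕ // IsAntiLectureHall l} //
        posFloorCount l.1 = m} => alhWeight l.1.1 : MvPowerSeries (Fin 3) R) =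
      monomial (single 0 m + single 2 ((m + 1).choose 2)) 1 *
        (boxGF 2 m b *
          weightGF fun μ : {μ : Fin m → ℕ // IsAntiLectureHall μ} => alhDualWeight μ.1) := by
  rw [boxGF, ← weightGF_prod, ← weightGF_const_add]
  exact weightGF_congr (fiberEquiv m b) fun p => alhWeight_glue p.1.2.2

end AntiLectureHall

end AntiLectureHall
theorem anti_lecture_hall_recurrence_general (n : ℕ) :
    alhGF n =
      ∑ m ∈ Finset.range (n + 1),
        ((∏ i ∈ Finset.range m,
            (1 - (MvPowerSeries.X 2 : MvPowerSeries (Fin 3) ℚ) ^ (n + 1 - m + i))) *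
         (∏ i ∈ Finset.range m,
            (1 - (MvPowerSeries.X 2 : MvPowerSeries (Fin 3) ℚ) ^ (1 + i)))⁻¹) *
        (MvPowerSeries.X 2 : MvPowerSeries (Fin 3) ℚ) ^ ((m + 1).choose 2) *
        (MvPowerSeries.X 0 : MvPowerSeries (Fin 3) ℚ) ^ m *
        alhGFinner m := by
  rw [alhGF_eq_weightGF, weightGF_eq_sum_fiberwise _ (fun l => posFloorCount l.1) (range (n + 1))
    fun l => mem_range_succ_iff.2 (posFloorCount_le l.1)]
  refine sum_congr rfl fun m hm => ?_
  obtain ⟨b, rfl⟩ := Nat.exists_eq_add_of_le (mem_range_succ_iff.1 hm)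
  have hexp : ∀ i, m + b + 1 - m + i = b + 1 + i := fun i => by omega
  have hmonomial :
      (monomial (single 0 m + single 2 ((m + 1).choose 2)) 1 : MvPowerSeries (Fin 3) ℚ) =
        X 0 ^ m * X 2 ^ (m + 1).choose 2 := by
    rw [X_pow_eq, X_pow_eq, monomial_mul_monomial, one_mul]
  rw [AntiLectureHall.weightGF_posFloorCount_fiber, hmonomial, alhGFinner_eq_weightGF,
    ← prod_one_sub_X_pow_mul_inv_eq_boxGF]
  simp only [hexp]
  ring

/-- The recurrence for the refined anti-lecture hall generating function:
`A_n(u,v,q) = ∑_{m=0}^{n} [n choose m]_q · q^{binom(m+1,2)} · u^m ·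
  ∑_{λ∈A_m} q^{|λ|} u^{|⌊λ⌋|} v^{m-o(⌊λ⌋)}`. -/
theorem anti_lecture_hall_recurrence (n : ℕ) (hn : 0 < n) :
    alhGF n =
      ∑ m ∈ Finset.range (n + 1),
        ((∏ i ∈ Finset.range m,
            (1 - (MvPowerSeries.X 2 : MvPowerSeries (Fin 3) ℚ) ^ (n + 1 - m + i))) *
         (∏ i ∈ Finset.range m,
            (1 - (MvPowerSeries.X 2 : MvPowerSeries (Fin 3) ℚ) ^ (1 + i)))⁻¹) *
        (MvPowerSeries.X 2 : MvPowerSeries (Fin 3) ℚ) ^ ((m + 1).choose 2) *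
        (MvPowerSeries.X 0 : MvPowerSeries (Fin 3) ℚ) ^ m *
        alhGFinner m :=
  anti_lecture_hall_recurrence_general n

end
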